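/- Let n ≥ 1, let f : ℝⁿ → ℝ, and let f̃ be a smoothing function of f. If x* ∈ S^{n−1} is a local minimizer of f relative to S^{n−1}, then x* is a stationary point of f associated with f̃ on the sphere: liminf_{x → x*, x ∈ S^{n−1}, μ → 0⁺} ‖Proj_x(∇_x f̃(x, μ))‖ = 0; equivalently, there exist sequences x_k ∈ S^{n−1} with x_k → x* and μ_k → 0⁺ such that the Riemannian gradients Proj_{x_k}(∇_x f̃(x_k, μ_k)) = ∇_x f̃(x_k, μ_k) − ⟨∇_x f̃(x_k, μ_k), x_k⟩ x_k converge to 0. -/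

import Mathlib

/-!
For small `μ > 0`, minimize `ft(·, μ) + ‖· - x*‖²` over the part of the sphere near
`x*`. Since `f` is minimal at `x*` and `|ft(·, μ) - f| ≤ κ ω(μ)`, a minimizer `x_μ`
satisfies `‖x_μ - x*‖² ≤ 2 κ ω(μ)`; so it lies inside the neighbourhood and is a local
minimizer on the whole sphere. The Lagrange multiplier rule makes
`∇ft(x_μ, μ) + 2 (x_μ - x*)` a multiple of `x_μ`, hence
`‖Proj_{x_μ} ∇ft(x_μ, μ)‖ ≤ 2 ‖x_μ - x*‖ → 0`.
-/

open Filter Topology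

/-- The orthogonal projection onto the tangent space of the unit sphere at `x`:
`Proj_x(v) = v − ⟨v, x⟩x`. -/
noncomputable def sphereProj {n : ℕ} (x v : EuclideanSpace ℝ (Fin n)) :
    EuclideanSpace ℝ (Fin n) :=
  v - (inner ℝ v x : ℝ) • x

/-- `ft` is a smoothing function of `f : ℝⁿ → ℝ` with constant `κ > 0` and function `ω`. -/
def IsSmoothingFun {n : ℕ} (f : EuclideanSpace ℝ (Fin n) → ℝ)
    (ft : EuclideanSpace ℝ (Fin n) → ℝ → ℝ) (κ : ℝ) (ω : ℝ → ℝ) : Prop :=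
  0 < κ ∧ (∀ μ > (0 : ℝ), ContDiff ℝ 1 (fun x => ft x μ)) ∧
    (∀ μ > (0 : ℝ), 0 < ω μ) ∧ Filter.Tendsto ω (nhdsWithin 0 (Set.Ioi 0)) (nhds 0) ∧
    ∀ x, ∀ μ > (0 : ℝ), |ft x μ - f x| ≤ κ * ω μ

open Metric InnerProductSpace
open scoped RealInnerProductSpace

lemma exists_gradient_eq_smul_of_isLocalExtrOn_sphere {E : Type*} [NormedAddCommGroup E]
    [InnerProductSpace ℝ E] [CompleteSpace E] {φ : E → ℝ} {x : E} (hx : x ≠ 0)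
    (hφ : ContDiffAt ℝ 1 φ x) (hextr : IsLocalExtrOn φ (sphere 0 ‖x‖) x) :
    ∃ c : ℝ, gradient φ x = c • x := by
  have hlevel : {y : E | ‖y‖ ^ 2 = ‖x‖ ^ 2} = sphere 0 ‖x‖ := by
    ext y
    simp
  obtain ⟨a, b, hab, hmul⟩ := (hlevel ▸ hextr).exists_multipliers_of_hasStrictFDerivAt_1d
    (hasStrictFDerivAt_norm_sq x) (hφ.hasStrictFDerivAt one_ne_zero)
  have hmul_apply (v : E) : a * (2 * ⟪x, v⟫) + b * fderiv ℝ φ x v = 0 := by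
    simpa using DFunLike.congr_fun hmul v
  have hb : b ≠ 0 := by
    rintro rfl
    have ha : a = 0 := by simpa [hx] using hmul_apply x
    exact hab (by simp [ha])
  refine ⟨-(2 * a) / b, ext_inner_right ℝ fun v => ?_⟩
  rw [inner_gradient_left, real_inner_smul_left]
  field_simp
  linarith [hmul_apply v]

lemma exists_isLocalMinOn_add_dist_sq {X : Type*} [MetricSpace X] [ProperSpace X]
    {S : Set X} (hS : IsClosed S) {f g : X → ℝ} (hg : Continuous g) {x₀ : X}
    (hx₀ : x₀ ∈ S) {r η : ℝ} (hr : 0 ≤ r) (hmin : ∀ y ∈ S, dist y x₀ ≤ r → f x₀ ≤ f y)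
    (hgf : ∀ y ∈ S, |g y - f y| ≤ η) (hη : 2 * η < r ^ 2) :
    ∃ x ∈ S, dist x x₀ ^ 2 ≤ 2 * η ∧ IsLocalMinOn (fun y => g y + dist y x₀ ^ 2) S x := by
  have hx₀K : x₀ ∈ S ∩ closedBall x₀ r := ⟨hx₀, mem_closedBall_self hr⟩
  have hΦ : Continuous fun y => g y + dist y x₀ ^ 2 := by fun_prop
  obtain ⟨x, ⟨hxS, hxr⟩, hxmin⟩ :=
    ((isCompact_closedBall x₀ r).inter_left hS).exists_isMinOn ⟨x₀, hx₀K⟩ hΦ.continuousOn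
  have hdist : dist x x₀ ^ 2 ≤ 2 * η := by
    have hle : g x + dist x x₀ ^ 2 ≤ g x₀ + dist x₀ x₀ ^ 2 := hxmin hx₀K
    have hfx := hmin x hxS hxr
    have hgx := abs_le.1 (hgf x hxS)
    have hgx₀ := abs_le.1 (hgf x₀ hx₀)
    simp only [dist_self] at hle
    linarith
  have hxball : x ∈ ball x₀ r := by
    rw [mem_ball]
    exact lt_of_pow_lt_pow_left₀ 2 hr (by linarith)
  refine ⟨x, hxS, hdist, ?_⟩
  have hball : closedBall x₀ r ∈ 𝓝[S] x :=
    mem_nhdsWithin_of_mem_nhds <|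
      mem_of_superset (isOpen_ball.mem_nhds hxball) ball_subset_closedBall
  rw [IsLocalMinOn, ← nhdsWithin_inter_of_mem' hball]
  exact hxmin.localize

section sphereProj

variable {n : ℕ} {x : EuclideanSpace ℝ (Fin n)}

lemma sphereProj_add_smul_self (hx : ‖x‖ = 1) (v : EuclideanSpace ℝ (Fin n)) (c : ℝ) :
    sphereProj x (v + c • x) = sphereProj x v := by
  simp only [sphereProj, inner_add_left, real_inner_smul_left, real_inner_self_eq_norm_sq, hx]
  module

lemma norm_sphereProj_le (hx : ‖x‖ = 1) (v : EuclideanSpace ℝ (Fin n)) :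
    ‖sphereProj x v‖ ≤ ‖v‖ := by
  have hsq : ‖sphereProj x v‖ ^ 2 = ‖v‖ ^ 2 - ⟪v, x⟫ ^ 2 := by
    rw [sphereProj, norm_sub_sq_real, norm_smul, real_inner_smul_right, hx, Real.norm_eq_abs,
      mul_one, sq_abs]
    ring
  exact le_of_pow_le_pow_left₀ two_ne_zero (norm_nonneg v) (by nlinarith [sq_nonneg ⟪v, x⟫])

end sphereProj

lemma exists_norm_sphereProj_gradient_le {n : ℕ} {f g : EuclideanSpace ℝ (Fin n) → ℝ}
    (hg : ContDiff ℝ 1 g) {x₀ : EuclideanSpace ℝ (Fin n)} (hx₀ : ‖x₀‖ = 1) {r η : ℝ}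
    (hr : 0 ≤ r) (hmin : ∀ y, ‖y‖ = 1 → ‖y - x₀‖ ≤ r → f x₀ ≤ f y)
    (hgf : ∀ y, |g y - f y| ≤ η) (hη : 2 * η < r ^ 2) :
    ∃ x, ‖x‖ = 1 ∧ ‖x - x₀‖ ≤ √(2 * η) ∧ ‖sphereProj x (gradient g x)‖ ≤ 2 * ‖x - x₀‖ := by
  obtain ⟨x, hx, hdist, hloc⟩ := exists_isLocalMinOn_add_dist_sq isClosed_sphere
    hg.continuous (mem_sphere_zero_iff_norm.2 hx₀) hr
    (fun y hy hyr => hmin y (mem_sphere_zero_iff_norm.1 hy) (dist_eq_norm y x₀ ▸ hyr))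
    (fun y _ => hgf y) hη
  rw [mem_sphere_zero_iff_norm] at hx
  simp only [dist_eq_norm] at hdist hloc
  have hΦ_deriv : HasFDerivAt (fun y => g y + ‖y - x₀‖ ^ 2)
      (fderiv ℝ g x + 2 • innerSL ℝ (x - x₀)) x := by
    refine ((hg.differentiable one_ne_zero x).hasFDerivAt.add
      ((hasFDerivAt_id x).sub_const x₀).norm_sq).congr_fderiv ?_
    ext v
    simp
  have hΦ_smooth : ContDiff ℝ 1 fun y => g y + ‖y - x₀‖ ^ 2 :=
    hg.add ((contDiff_id.sub contDiff_const).norm_sq ℝ)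
  obtain ⟨c, hc⟩ := exists_gradient_eq_smul_of_isLocalExtrOn_sphere
    (norm_ne_zero_iff.1 (by simp [hx])) hΦ_smooth.contDiffAt (hx ▸ Or.inl hloc)
  have hgrad : gradient g x = -((2 : ℝ) • (x - x₀)) + c • x := by
    refine ext_inner_right ℝ fun v => ?_
    have hcv := congrArg (fun w => ⟪w, v⟫_ℝ) hc
    simp only [inner_gradient_left, hΦ_deriv.fderiv] at hcv
    simp only [inner_gradient_left, inner_add_left, inner_neg_left, real_inner_smul_left,
      ← hcv, add_apply, smul_apply, innerSL_apply_apply]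
    ring
  refine ⟨x, hx, Real.le_sqrt_of_sq_le hdist, ?_⟩
  calc ‖sphereProj x (gradient g x)‖ = ‖sphereProj x (-((2 : ℝ) • (x - x₀)))‖ := by
        rw [hgrad, sphereProj_add_smul_self hx]
    _ ≤ ‖-((2 : ℝ) • (x - x₀))‖ := norm_sphereProj_le hx _
    _ = 2 * ‖x - x₀‖ := by simp [norm_smul]

theorem local_min_is_smoothing_stationary_on_sphere_general (n : ℕ)
    (f : EuclideanSpace ℝ (Fin n) → ℝ) (ft : EuclideanSpace ℝ (Fin n) → ℝ → ℝ)
    (κ : ℝ) (ω : ℝ → ℝ) (hsm : IsSmoothingFun f ft κ ω)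
    (xs : EuclideanSpace ℝ (Fin n)) (hxs : ‖xs‖ = 1)
    (hmin : ∃ ε > (0 : ℝ), ∀ y, ‖y‖ = 1 → ‖y - xs‖ < ε → f xs ≤ f y) :
    ∃ (x : ℕ → EuclideanSpace ℝ (Fin n)) (μ : ℕ → ℝ),
      (∀ k, ‖x k‖ = 1) ∧ Filter.Tendsto x Filter.atTop (nhds xs) ∧
      (∀ k, 0 < μ k) ∧ Filter.Tendsto μ Filter.atTop (nhds 0) ∧
      Filter.Tendsto (fun k => sphereProj (x k) (gradient (fun y => ft y (μ k)) (x k)))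
        Filter.atTop (nhds 0) := by
  obtain ⟨ε, hε, hεmin⟩ := hmin
  obtain ⟨-, hC1, -, hω, hbound⟩ := hsm
  have hη : Tendsto (fun μ => 2 * (κ * ω μ)) (𝓝[>] 0) (𝓝 0) := by
    simpa using (hω.const_mul κ).const_mul 2
  have hsmall : ∀ᶠ μ in 𝓝[>] 0, 0 < μ ∧ 2 * (κ * ω μ) < (ε / 2) ^ 2 :=
    (eventually_mem_nhdsWithin (a := (0 : ℝ))).and
      (hη.eventually (gt_mem_nhds (by positivity)))
  obtain ⟨μ, hμ, hμsmall⟩ := exists_seq_forall_of_frequently hsmall.frequently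
  choose x hx_norm hx_dist hx_proj using fun k => exists_norm_sphereProj_gradient_le
    (hC1 (μ k) (hμsmall k).1) hxs (by positivity)
    (fun y hy hyr => hεmin y hy (by linarith)) (fun y => hbound y (μ k) (hμsmall k).1)
    (hμsmall k).2
  have hx : Tendsto x atTop (𝓝 xs) := by
    rw [tendsto_iff_norm_sub_tendsto_zero]
    refine squeeze_zero (fun k => norm_nonneg _) hx_dist ?_
    simpa using (hη.comp hμ).sqrt
  refine ⟨x, μ, hx_norm, hx, fun k => (hμsmall k).1, tendsto_nhds_of_tendsto_nhdsWithin hμ, ?_⟩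
  rw [tendsto_zero_iff_norm_tendsto_zero]
  refine squeeze_zero (fun k => norm_nonneg _) hx_proj ?_
  simpa using (tendsto_iff_norm_sub_tendsto_zero.1 hx).const_mul 2

/-- If `x* ∈ S^{n−1}` is a local minimizer of `f` relative to the sphere and `ft` is a
smoothing function of `f`, then `x*` is a stationary point of `f` associated with `ft`
on the sphere: there exist sequences `x_k ∈ S^{n−1}` with `x_k → x*` and `μ_k → 0⁺`
such that the Riemannian gradients `Proj_{x_k}(∇_x ft(x_k, μ_k))` converge to `0`. -/
theorem local_min_is_smoothing_stationary_on_sphere (n : ℕ) (hn : 1 ≤ n)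
    (f : EuclideanSpace ℝ (Fin n) → ℝ) (ft : EuclideanSpace ℝ (Fin n) → ℝ → ℝ)
    (κ : ℝ) (ω : ℝ → ℝ) (hsm : IsSmoothingFun f ft κ ω)
    (xs : EuclideanSpace ℝ (Fin n)) (hxs : ‖xs‖ = 1)
    (hmin : ∃ ε > (0 : ℝ), ∀ y, ‖y‖ = 1 → ‖y - xs‖ < ε → f xs ≤ f y) :
    ∃ (x : ℕ → EuclideanSpace ℝ (Fin n)) (μ : ℕ → ℝ),
      (∀ k, ‖x k‖ = 1) ∧ Filter.Tendsto x Filter.atTop (nhds xs) ∧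
      (∀ k, 0 < μ k) ∧ Filter.Tendsto μ Filter.atTop (nhds 0) ∧
      Filter.Tendsto (fun k => sphereProj (x k) (gradient (fun y => ft y (μ k)) (x k)))
        Filter.atTop (nhds 0) :=
  local_min_is_smoothing_stationary_on_sphere_general n f ft κ ω hsm xs hxs hmin
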